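/- Let G be a group, H a subgroup of G of finite index, and N(H) = ⋂_{g ∈ G} g⁻¹Hg the normal core of H in G. Then G is not icc if and only if either (i) H is not icc, or (iii) there exists g ∈ G \ H with g ≠ 1 of finite order and some h ∈ N(H) such that g⁻¹kg = h⁻¹kh for all k ∈ N(H). -/

import Mathlib

/-!
Let `F(G)` be the FC-center of `G`, the normal subgroup of elements with finitely many
conjugates; `G` is icc exactly when it is nontrivial and `F(G) = 1`. An element has finitely
many conjugates iff its centralizer has finite index, so for `H` of finite index
`F(H) = F(G) ∩ H`. If `H` is icc but `G` is not, `F(G)` is therefore a nontrivial normal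
subgroup meeting `H` trivially: it is finite (it embeds in `G / H`), and it commutes with
the normal subgroup `N(H)` because `[F(G), N(H)] ⊆ F(G) ∩ N(H) = 1`; any `g ≠ 1` in `F(G)`
gives (iii) with `h = 1`. Conversely, under (iii) the element `g h⁻¹ ≠ 1` centralizes the
finite-index subgroup `N(H)`, so it has finitely many conjugates.
-/

/-- A group is *icc* (with infinite conjugacy classes) if it is nontrivial and the
conjugacy class of every nontrivial element is infinite. -/
def IsICC (G : Type*) [Group G] : Prop :=
  Nontrivial G ∧ ∀ g : G, g ≠ 1 → {h : G | ∃ x : G, x⁻¹ * g * x = h}.Infinite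

namespace Subgroup

variable {G : Type*} [Group G]

theorem finite_conjugatesOf_iff_finiteIndex_centralizer (g : G) :
    (conjugatesOf g).Finite ↔ (centralizer {g}).FiniteIndex := by
  have horbit : MulAction.orbit (ConjAct G) g = conjugatesOf g := by
    ext h; rw [ConjAct.mem_orbit_conjAct]; exact isConj_comm
  have hindex : (centralizer {g}).index = (conjugatesOf g).ncard := by
    rw [centralizer_eq_comap_stabilizer, ← horbit, ← MulAction.index_stabilizer]
    exact index_comap_of_surjective _ (f := ConjAct.toConjAct.toMonoidHom)
      ConjAct.toConjAct.surjective
  rw [finiteIndex_iff, hindex]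
  exact ⟨fun h => ((Set.ncard_pos h).2 ⟨g, mem_conjugatesOf_self⟩).ne',
    Set.finite_of_ncard_ne_zero⟩

variable (G) in
def fcCenter : Subgroup G where
  carrier := {g | (conjugatesOf g).Finite}
  one_mem' := (Set.finite_singleton 1).subset fun _ h => isConj_one_right.1 h
  mul_mem' {a b} ha hb := by
    simp only [Set.mem_ofPred_eq, finite_conjugatesOf_iff_finiteIndex_centralizer] at ha hb ⊢
    refine finiteIndex_of_le (H := centralizer {a} ⊓ centralizer {b}) fun k hk => ?_
    simp only [mem_inf, mem_centralizer_singleton_iff] at hk ⊢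
    exact Commute.mul_right hk.1 hk.2
  inv_mem' {a} ha := by
    simp only [Set.mem_ofPred_eq, finite_conjugatesOf_iff_finiteIndex_centralizer] at ha ⊢
    refine finiteIndex_of_le (H := centralizer {a}) fun k hk => ?_
    simp only [mem_centralizer_singleton_iff] at hk ⊢
    exact Commute.inv_right hk

theorem mem_fcCenter_iff {g : G} : g ∈ fcCenter G ↔ (conjugatesOf g).Finite := Iff.rfl

theorem mem_fcCenter_of_le_centralizer {K : Subgroup G} [K.FiniteIndex] {g : G}
    (h : K ≤ centralizer {g}) : g ∈ fcCenter G :=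
  (finite_conjugatesOf_iff_finiteIndex_centralizer g).2 (finiteIndex_of_le h)

instance : (fcCenter G).Normal where
  conj_mem g hg c := by
    rw [mem_fcCenter_iff, ← (isConj_iff.2 ⟨c, rfl⟩).conjugatesOf_eq]
    exact hg

theorem coe_mem_fcCenter_iff {H : Subgroup G} [H.FiniteIndex] (h : H) :
    (h : G) ∈ fcCenter G ↔ h ∈ fcCenter H := by
  simp only [mem_fcCenter_iff, finite_conjugatesOf_iff_finiteIndex_centralizer]
  have hcomm : ∀ k : H, Commute (k : G) h ↔ Commute k h := fun k => by
    simp only [Commute, SemiconjBy, ← Subgroup.coe_mul, Subtype.coe_inj]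
  constructor
  · intro hG
    refine finiteIndex_of_le (H := (centralizer {(h : G)}).subgroupOf H) fun k hk => ?_
    rw [mem_subgroupOf, mem_centralizer_singleton_iff] at hk
    exact mem_centralizer_singleton_iff.2 ((hcomm k).1 hk)
  · intro hH
    have : ((centralizer {h}).map H.subtype).FiniteIndex := ⟨by
      rw [index_map_subtype]
      exact mul_ne_zero FiniteIndex.index_ne_zero FiniteIndex.index_ne_zero⟩
    refine finiteIndex_of_le (H := (centralizer {h}).map H.subtype) ?_
    rintro _ ⟨k, hk, rfl⟩
    exact mem_centralizer_singleton_iff.2 ((hcomm k).2 (mem_centralizer_singleton_iff.1 hk))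

theorem map_subtype_fcCenter (H : Subgroup G) [H.FiniteIndex] :
    (fcCenter H).map H.subtype = fcCenter G ⊓ H := by
  ext g
  constructor
  · rintro ⟨h, hh, rfl⟩
    exact ⟨(coe_mem_fcCenter_iff h).2 hh, h.2⟩
  · rintro ⟨hg, hgH⟩
    exact ⟨⟨g, hgH⟩, (coe_mem_fcCenter_iff ⟨g, hgH⟩).1 hg, rfl⟩

theorem fcCenter_eq_bot_iff_disjoint (H : Subgroup G) [H.FiniteIndex] :
    fcCenter H = ⊥ ↔ Disjoint (fcCenter G) H := by
  rw [← map_eq_bot_iff_of_injective _ H.subtype_injective, map_subtype_fcCenter, disjoint_iff]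

theorem finite_of_disjoint_of_finiteIndex {K H : Subgroup G} [H.FiniteIndex]
    (h : Disjoint K H) : Finite K := by
  have hbot : H.subgroupOf K = ⊥ := subgroupOf_eq_bot.2 h.symm
  exact (finite_iff_finite_and_finiteIndex (H := H.subgroupOf K)).2
    ⟨by rw [hbot]; infer_instance, inferInstance⟩

end Subgroup

open Subgroup

section

variable {G : Type*} [Group G]

theorem setOf_conj_eq_conjugatesOf (g : G) :
    {h : G | ∃ x : G, x⁻¹ * g * x = h} = conjugatesOf g := by
  ext h
  refine ⟨fun ⟨x, hx⟩ => isConj_iff.2 ⟨x⁻¹, by rwa [inv_inv]⟩, fun hc => ?_⟩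
  obtain ⟨c, hc⟩ := isConj_iff.1 hc
  exact ⟨c⁻¹, by rwa [inv_inv]⟩

theorem isICC_iff : IsICC G ↔ Nontrivial G ∧ fcCenter G = ⊥ := by
  simp only [IsICC, setOf_conj_eq_conjugatesOf, eq_bot_iff_forall, mem_fcCenter_iff]
  exact and_congr_right fun _ => forall_congr' fun _ => by rw [Set.Infinite, ne_eq, not_imp_not]

theorem IsICC.infinite (hG : IsICC G) : Infinite G := by
  obtain ⟨g, hg⟩ := @exists_ne G hG.1 1
  exact Set.infinite_coe_iff.2 (hG.2 g hg) |>.of_injective _ Subtype.val_injective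

theorem IsICC.of_finiteIndex (hG : IsICC G) (H : Subgroup G) [H.FiniteIndex] : IsICC H := by
  have : Infinite G := hG.infinite
  have : Infinite H := by
    by_contra hfin
    rw [not_infinite_iff_finite] at hfin
    have : Finite G := (finite_iff_finite_and_finiteIndex (H := H)).2 ⟨hfin, inferInstance⟩
    exact not_finite G
  rw [isICC_iff] at hG ⊢
  exact ⟨inferInstance, (fcCenter_eq_bot_iff_disjoint H).2 (by simp [disjoint_iff, hG.2])⟩

end

/-- G is not icc iff H is not icc or some torsion g ∉ H acts on the normal core of H
as conjugation by an element of the normal core. -/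
theorem stmt_7 {G : Type*} [Group G] (H : Subgroup G) [H.FiniteIndex] :
    ¬ IsICC G ↔
      (¬ IsICC H ∨
        ∃ g : G, g ∉ H ∧ g ≠ 1 ∧ IsOfFinOrder g ∧
          ∃ h ∈ H.normalCore, ∀ k ∈ H.normalCore, g⁻¹ * k * g = h⁻¹ * k * h) := by
  constructor
  · refine fun hG => or_iff_not_imp_left.2 fun hH => ?_
    rw [not_not] at hH
    have hdisj : Disjoint (fcCenter G) H := (fcCenter_eq_bot_iff_disjoint H).1 (isICC_iff.1 hH).2
    have : Infinite G := hH.infinite.of_injective _ Subtype.val_injective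
    obtain ⟨g, hgF, hg1⟩ := (fcCenter G).bot_or_exists_ne_one.resolve_left
      fun h => hG (isICC_iff.2 ⟨inferInstance, h⟩)
    have : Finite (fcCenter G) := finite_of_disjoint_of_finiteIndex hdisj
    refine ⟨g, fun hgH => hg1 (disjoint_def.1 hdisj hgF hgH), hg1,
      Submonoid.isOfFinOrder_coe.2 (isOfFinOrder_of_finite (⟨g, hgF⟩ : fcCenter G)),
      1, one_mem _, fun k hk => ?_⟩
    have hgk : Commute g k := commute_of_normal_of_disjoint _ _ inferInstance inferInstance
      (hdisj.mono_right H.normalCore_le) g k hgF hk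
    rw [inv_one, one_mul, mul_one, mul_assoc, ← hgk.eq, inv_mul_cancel_left]
  · rintro (hH | ⟨g, hgH, -, -, h, hh, hconj⟩) hG
    · exact hH (hG.of_finiteIndex H)
    · have hcomm : H.normalCore ≤ centralizer {g * h⁻¹} := fun k hk => by
        rw [mem_centralizer_singleton_iff]
        calc k * (g * h⁻¹) = g * (g⁻¹ * k * g) * h⁻¹ := by group
          _ = g * (h⁻¹ * k * h) * h⁻¹ := by rw [hconj k hk]
          _ = g * h⁻¹ * k := by group
      have hgh : g * h⁻¹ = 1 := by
        simpa [(isICC_iff.1 hG).2] using mem_fcCenter_of_le_centralizer hcomm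
      exact hgH (mul_inv_eq_one.1 hgh ▸ H.normalCore_le hh)
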